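/- arXiv:1302.1650 — 4 statements merged into one kernel-verified Lean document; each statement's English description precedes it below -/
import Mathlib

section
/- For 0 < s < t ≤ 1 and I = (0,1), the inclusion BV^t(I) ⊆ BV^s(I) is strict: the step function u(x) = ∑_{n≥1} a_n 1_{( (n+1)^{-1}, n^{-1} ]}(x) with a_n = ∑_{p=1}^n (−1)^p p^{−t} belongs to BV^s(I) but not to BV^t(I). -/
open Set MeasureTheory Filter Topology ENNReal

/-- The `s`-total variation of `u` on a set `S ⊆ ℝ`: the supremum over all finite
subdivisions `x 0 < x 1 < ⋯ < x n` contained in `S` of `∑ |u (x (i+1)) - u (x i)| ^ (1/s)`. -/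
noncomputable def TVs (s : ℝ) (u : ℝ → ℝ) (S : Set ℝ) : ℝ≥0∞ :=
  sSup {v : ℝ≥0∞ | ∃ (n : ℕ) (x : ℕ → ℝ),
    (∀ i, i ≤ n → x i ∈ S) ∧ (∀ i, i < n → x i < x (i + 1)) ∧
    v = ∑ i ∈ Finset.range n, ENNReal.ofReal (|u (x (i + 1)) - u (x i)| ^ (1 / s))}

/-!
On `(1/(n+1), 1/n]` the function `u` equals the partial sum `a_n` of the alternating series
`∑ (-1)^p p^{-t}`, and `|a_k - a_l| ≤ (l+1)^{-t}` for `l ≤ k`. Along an increasing subdivision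
the index `⌊1/x⌋` decreases, so the jumps can be charged to pairwise disjoint blocks of indices
and `TV^s u ≤ ∑_l (l+1)^{-t/s} < ∞` because `t/s > 1`. The points `1/(i+2)` see every single
jump `|a_{i+3} - a_{i+2}| = (i+3)^{-t}`, so `TV^t u ≥ ∑_i 1/(i+3) = ∞`.
-/

open Finset in
theorem sum_range_neg_one_pow_mul_mem_Icc {E : Type*} [Ring E] [PartialOrder E] [IsOrderedRing E]
    {f : ℕ → E} (hf : Antitone f) (hf0 : ∀ i, 0 ≤ f i) (n : ℕ) :
    ∑ i ∈ range n, (-1) ^ i * f i ∈ Icc 0 (f 0) := by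
  induction n generalizing f with
  | zero => simpa using hf0 0
  | succ n ih =>
    obtain ⟨h0, h1⟩ := ih (hf.comp_monotone (fun _ _ h => Nat.succ_le_succ h)) (fun i => hf0 _)
    have hsucc : ∑ i ∈ range (n + 1), (-1) ^ i * f i
        = f 0 - ∑ i ∈ range n, (-1) ^ i * f (i + 1) := by
      simp only [sum_range_succ', pow_succ, mul_neg_one, neg_mul, sum_neg_distrib, pow_zero,
        one_mul]
      abel
    rw [hsucc]
    exact ⟨sub_nonneg.mpr (h1.trans (hf (Nat.zero_le 1))), sub_le_self _ h0⟩

open Finset in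
theorem sum_range_le_sum_Ico_of_succ_le {M : Type*} [AddCommMonoid M] [PartialOrder M]
    [IsOrderedAddMonoid M] {m : ℕ → ℕ} {c g : ℕ → M} {n : ℕ}
    (hm : ∀ i < n, m (i + 1) ≤ m i) (hc : ∀ i < n, c i ≤ ∑ j ∈ Ico (m (i + 1)) (m i), g j) :
    m n ≤ m 0 ∧ ∑ i ∈ range n, c i ≤ ∑ j ∈ Ico (m n) (m 0), g j := by
  induction n with
  | zero => simp
  | succ n ih =>
    obtain ⟨hn0, hsum⟩ := ih (fun i hi => hm i (by omega)) (fun i hi => hc i (by omega))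
    have hn := hm n n.lt_succ_self
    refine ⟨hn.trans hn0, ?_⟩
    rw [sum_range_succ, ← sum_Ico_consecutive g hn hn0, add_comm (∑ j ∈ Ico _ _, g j)]
    exact add_le_add hsum (hc n n.lt_succ_self)

theorem sum_le_TVs_of_strictAnti (s : ℝ) (u : ℝ → ℝ) {S : Set ℝ} {y : ℕ → ℝ}
    (hyS : ∀ i, y i ∈ S) (hy : StrictAnti y) (n : ℕ) :
    ∑ i ∈ Finset.range n, ENNReal.ofReal (|u (y i) - u (y (i + 1))| ^ (1 / s)) ≤ TVs s u S := by
  refine le_sSup ⟨n, fun i => y (n - i), fun i _ => hyS _, fun i hi => hy (by omega), ?_⟩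
  rw [← Finset.sum_range_reflect]
  refine Finset.sum_congr rfl fun i hi => ?_
  have hlt := Finset.mem_range.mp hi
  dsimp only
  rw [show n - 1 - i + 1 = n - i by omega, show n - (i + 1) = n - 1 - i by omega, abs_sub_comm]

noncomputable def altPartialSum (t : ℝ) (n : ℕ) : ℝ :=
  ∑ p ∈ Finset.Icc 1 n, (-1 : ℝ) ^ p / (p : ℝ) ^ t

theorem altPartialSum_add_sub (t : ℝ) (l n : ℕ) :
    altPartialSum t (l + n) - altPartialSum t l
      = (-1) ^ (l + 1) * ∑ i ∈ Finset.range n, (-1) ^ i * ((l + 1 + i : ℕ) : ℝ) ^ (-t) := by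
  induction n with
  | zero => simp
  | succ n ih =>
    rw [← add_assoc, altPartialSum, Finset.sum_Icc_succ_top (by omega), ← altPartialSum,
      add_sub_right_comm, ih, Finset.sum_range_succ, Real.rpow_neg (Nat.cast_nonneg _),
      show l + 1 + n = l + n + 1 by omega]
    ring

theorem abs_altPartialSum_sub_le {t : ℝ} (ht : 0 ≤ t) {l k : ℕ} (hlk : l ≤ k) :
    |altPartialSum t k - altPartialSum t l| ≤ ((l : ℝ) + 1) ^ (-t) := by
  obtain ⟨n, rfl⟩ := Nat.exists_eq_add_of_le hlk
  have hf : Antitone fun i : ℕ => ((l + 1 + i : ℕ) : ℝ) ^ (-t) := fun i j hij =>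
    Real.rpow_le_rpow_of_nonpos (by positivity) (by gcongr) (by linarith)
  have hmem := sum_range_neg_one_pow_mul_mem_Icc hf (fun i => by positivity) n
  rw [altPartialSum_add_sub, abs_mul, abs_pow, abs_neg, abs_one, one_pow, one_mul,
    abs_of_nonneg hmem.1]
  simpa using hmem.2

theorem abs_altPartialSum_succ_sub (t : ℝ) (k : ℕ) :
    |altPartialSum t (k + 1) - altPartialSum t k| = ((k : ℝ) + 1) ^ (-t) := by
  rw [altPartialSum, Finset.sum_Icc_succ_top (by omega), ← altPartialSum, add_sub_cancel_left,
    abs_div, abs_pow, abs_neg, abs_one, one_pow, Real.rpow_neg (by positivity),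
    abs_of_nonneg (by positivity)]
  push_cast
  rw [one_div]

theorem ofReal_abs_altPartialSum_sub_rpow_le {s t : ℝ} (hs : 0 < s) (ht : 0 ≤ t) {l k : ℕ}
    (hlk : l ≤ k) :
    ENNReal.ofReal (|altPartialSum t k - altPartialSum t l| ^ (1 / s))
      ≤ ∑ j ∈ Finset.Ico l k, ENNReal.ofReal (((j : ℝ) + 1) ^ (-(t / s))) := by
  rcases hlk.eq_or_lt with rfl | hlt
  · simp [Real.zero_rpow, hs.ne']
  refine le_trans ?_ (Finset.single_le_sum (fun _ _ => bot_le)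
    (Finset.mem_Ico.mpr ⟨le_rfl, hlt⟩))
  gcongr
  calc |altPartialSum t k - altPartialSum t l| ^ (1 / s)
      ≤ (((l : ℝ) + 1) ^ (-t)) ^ (1 / s) := by gcongr; exact abs_altPartialSum_sub_le ht hlk
    _ = ((l : ℝ) + 1) ^ (-(t / s)) := by rw [← Real.rpow_mul (by positivity)]; ring_nf

def IsAltPartialSumStep (t : ℝ) (u : ℝ → ℝ) : Prop :=
  ∀ n : ℕ, 1 ≤ n → ∀ x ∈ Ioc ((n + 1 : ℝ)⁻¹) ((n : ℝ)⁻¹), u x = altPartialSum t n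

namespace IsAltPartialSumStep

variable {t : ℝ} {u : ℝ → ℝ}

theorem eq_floor_inv (hu : IsAltPartialSumStep t u) {y : ℝ} (hy : y ∈ Ioo 0 1) :
    u y = altPartialSum t ⌊y⁻¹⌋₊ := by
  have hy1 : 1 ≤ y⁻¹ := (one_lt_inv₀ hy.1).mpr hy.2 |>.le
  have hfloor : 1 ≤ ⌊y⁻¹⌋₊ := Nat.le_floor (by exact_mod_cast hy1)
  refine hu _ hfloor y ⟨?_, ?_⟩
  · exact (inv_lt_comm₀ (by positivity) hy.1).mpr (Nat.lt_floor_add_one _)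
  · exact (le_inv_comm₀ hy.1 (Nat.cast_pos.mpr hfloor)).mpr (Nat.floor_le (by positivity))

theorem eq_inv_natCast (hu : IsAltPartialSumStep t u) {j : ℕ} (hj : 1 ≤ j) :
    u (j : ℝ)⁻¹ = altPartialSum t j :=
  hu j hj _ ⟨inv_strictAnti₀ (by positivity) (lt_add_one _), le_rfl⟩

theorem TVs_lt_top (hu : IsAltPartialSumStep t u) {s : ℝ} (hs : 0 < s) (hst : s < t) :
    TVs s u (Ioo 0 1) < ⊤ := by
  set g : ℕ → ℝ≥0∞ := fun j => ENNReal.ofReal (((j : ℝ) + 1) ^ (-(t / s)))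
  have hg : ∑' j, g j < ⊤ := by
    have hp : -(t / s) < -1 := neg_lt_neg ((one_lt_div hs).mpr hst)
    have := (summable_nat_add_iff 1).mpr (Real.summable_nat_rpow.mpr hp)
    push_cast at this
    exact this.tsum_ofReal_lt_top
  refine lt_of_le_of_lt (sSup_le ?_) hg
  rintro _ ⟨n, x, hxS, hx, rfl⟩
  set m : ℕ → ℕ := fun i => ⌊(x i)⁻¹⌋₊
  have hm : ∀ i < n, m (i + 1) ≤ m i := fun i hi =>
    Nat.floor_mono (inv_anti₀ (hxS i hi.le).1 (hx i hi).le)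
  refine ((sum_range_le_sum_Ico_of_succ_le (g := g) hm fun i hi => ?_).2).trans
    (ENNReal.sum_le_tsum _)
  rw [hu.eq_floor_inv (hxS _ hi), hu.eq_floor_inv (hxS _ hi.le), abs_sub_comm]
  exact ofReal_abs_altPartialSum_sub_rpow_le hs (hs.trans hst).le (hm i hi)

theorem TVs_self_eq_top (hu : IsAltPartialSumStep t u) (ht : 0 < t) :
    TVs t u (Ioo 0 1) = ⊤ := by
  have hterm (i : ℕ) : |u ((i + 2 : ℕ) : ℝ)⁻¹ - u ((i + 1 + 2 : ℕ) : ℝ)⁻¹| ^ (1 / t)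
      = (((i + 2 : ℕ) : ℝ) + 1)⁻¹ := by
    rw [hu.eq_inv_natCast (by omega), hu.eq_inv_natCast (by omega),
      show i + 1 + 2 = i + 2 + 1 by omega, abs_sub_comm, abs_altPartialSum_succ_sub,
      ← Real.rpow_mul (by positivity), neg_mul, mul_one_div_cancel ht.ne', Real.rpow_neg_one]
  have hsum (N : ℕ) :
      ENNReal.ofReal (∑ i ∈ Finset.range N, (((i + 2 : ℕ) : ℝ) + 1)⁻¹) ≤ TVs t u (Ioo 0 1) := by
    have hmem (i : ℕ) : ((i + 2 : ℕ) : ℝ)⁻¹ ∈ Ioo 0 1 :=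
      ⟨by positivity, inv_lt_one_of_one_lt₀ (by push_cast; linarith [i.cast_nonneg (α := ℝ)])⟩
    have hanti : StrictAnti fun i : ℕ => ((i + 2 : ℕ) : ℝ)⁻¹ := fun i j hij =>
      inv_strictAnti₀ (by positivity) (by exact_mod_cast Nat.add_lt_add_right hij 2)
    rw [ENNReal.ofReal_sum_of_nonneg fun i _ => by positivity]
    simpa only [hterm] using sum_le_TVs_of_strictAnti t u hmem hanti N
  have hdiv : Tendsto (fun N => ∑ i ∈ Finset.range N, (((i + 2 : ℕ) : ℝ) + 1)⁻¹) atTop atTop := by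
    rw [← not_summable_iff_tendsto_nat_atTop_of_nonneg fun i => by positivity]
    refine mt (fun h => (summable_nat_add_iff 3).mp (h.congr fun i => ?_))
      Real.not_summable_natCast_inv
    push_cast
    ring_nf
  exact top_le_iff.mp (le_of_tendsto' (ENNReal.tendsto_ofReal_atTop.comp hdiv) hsum)

end IsAltPartialSumStep

theorem BVt_strict_subset_BVs_general (s t : ℝ) (hs : 0 < s) (hst : s < t)
    (u : ℝ → ℝ)
    (hu : ∀ n : ℕ, 1 ≤ n → ∀ x ∈ Set.Ioc ((n + 1 : ℝ)⁻¹) ((n : ℝ)⁻¹),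
      u x = ∑ p ∈ Finset.Icc 1 n, (-1 : ℝ) ^ p / (p : ℝ) ^ t) :
    TVs s u (Set.Ioo (0 : ℝ) 1) < ⊤ ∧ TVs t u (Set.Ioo (0 : ℝ) 1) = ⊤ :=
  have hu' : IsAltPartialSumStep t u := hu
  ⟨hu'.TVs_lt_top hs hst, hu'.TVs_self_eq_top (hs.trans hst)⟩

theorem BVt_strict_subset_BVs (s t : ℝ) (hs : 0 < s) (hst : s < t) (ht : t ≤ 1)
    (u : ℝ → ℝ)
    (hu : ∀ n : ℕ, 1 ≤ n → ∀ x ∈ Set.Ioc ((n + 1 : ℝ)⁻¹) ((n : ℝ)⁻¹),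
      u x = ∑ p ∈ Finset.Icc 1 n, (-1 : ℝ) ^ p / (p : ℝ) ^ t) :
    TVs s u (Set.Ioo (0 : ℝ) 1) < ⊤ ∧ TVs t u (Set.Ioo (0 : ℝ) 1) = ⊤ :=
  BVt_strict_subset_BVs_general s t hs hst u hu
end

section
/- If u : I → ℝ has finite s-total variation on the interval I for some s ∈ (0,1], then u is a regulated function: u has finite one-sided limits at every interior point of I (a right limit at every point that is not the right endpoint, and a left limit at every point that is not the left endpoint). -/
/-! If the oscillation of `u` on `(t, a)` stayed above some `ε > 0` for every `t < a`, one could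
pick points `x₀ < x₁ < ⋯ < a` in `I` with `|u xₙ₊₁ - u xₙ| ≥ ε`; the first `n` jumps alone
contribute `n ε^(1/s)` to the `s`-variation, which would be infinite. So `u` is Cauchy along
`𝓝[<] a`, hence converges. Right limits follow by the reflection `x ↦ -x`, which does not
increase the `s`-variation. -/

open Set MeasureTheory Filter Topology ENNReal

section TVs

variable {s : ℝ} {u : ℝ → ℝ} {S : Set ℝ}

theorem le_TVs {n : ℕ} {x : ℕ → ℝ} (hxS : ∀ i, i ≤ n → x i ∈ S)
    (hx : ∀ i, i < n → x i < x (i + 1)) :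
    ∑ i ∈ Finset.range n, ENNReal.ofReal (|u (x (i + 1)) - u (x i)| ^ (1 / s)) ≤ TVs s u S :=
  le_sSup ⟨n, x, hxS, hx, rfl⟩

theorem TVs_comp_neg_le : TVs s (fun x => u (-x)) (-S) ≤ TVs s u S := by
  refine sSup_le ?_
  rintro _ ⟨n, x, hxS, hx, rfl⟩
  calc ∑ i ∈ Finset.range n, ENNReal.ofReal (|u (-x (i + 1)) - u (-x i)| ^ (1 / s))
      = ∑ i ∈ Finset.range n,
          ENNReal.ofReal (|u (-x (n - (i + 1))) - u (-x (n - i))| ^ (1 / s)) := by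
        rw [← Finset.sum_range_reflect]
        refine Finset.sum_congr rfl fun i hi => ?_
        have hi : i < n := Finset.mem_range.mp hi
        rw [abs_sub_comm, show n - 1 - i + 1 = n - i by omega,
          show n - 1 - i = n - (i + 1) by omega]
    _ ≤ TVs s u S := by
        refine le_TVs (x := fun i => -x (n - i)) (fun i _ => Set.mem_neg.mp (hxS _ (by omega)))
          fun i hi => neg_lt_neg ?_
        have h := hx (n - (i + 1)) (by omega)
        rwa [show n - (i + 1) + 1 = n - i by omega] at h

theorem TVs_eq_top_of_strictMono (hs : 0 ≤ s) {x : ℕ → ℝ} (hx : StrictMono x)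
    (hxS : ∀ n, x n ∈ S) {ε : ℝ} (hε : 0 < ε) (hjump : ∀ n, ε ≤ |u (x (n + 1)) - u (x n)|) :
    TVs s u S = ⊤ := by
  set c := ENNReal.ofReal (ε ^ (1 / s))
  have hc : c ≠ 0 := by positivity
  have hsum (n : ℕ) : n * c ≤ TVs s u S := by
    calc n * c = (Finset.range n).card • c := by simp [nsmul_eq_mul]
      _ ≤ ∑ i ∈ Finset.range n, ENNReal.ofReal (|u (x (i + 1)) - u (x i)| ^ (1 / s)) :=
          Finset.card_nsmul_le_sum _ _ _ fun i _ =>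
            ENNReal.ofReal_le_ofReal (Real.rpow_le_rpow hε.le (hjump i) (by positivity))
      _ ≤ TVs s u S := le_TVs (fun i _ => hxS i) fun i _ => hx (Nat.lt_succ_self i)
  by_contra htop
  obtain ⟨n, hn⟩ := ENNReal.exists_nat_mul_gt hc htop
  exact (hsum n).not_gt hn

theorem exists_forall_abs_sub_lt_of_TVs_lt_top (hs : 0 ≤ s) {a b : ℝ} (hsub : Ico b a ⊆ S)
    (hfin : TVs s u S < ⊤) (hba : b < a) {ε : ℝ} (hε : 0 < ε) :
    ∃ t ∈ Ico b a, ∀ y ∈ Ioo t a, |u y - u t| < ε := by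
  by_contra! h
  choose! next hnext hjump using h
  have hmem (n : ℕ) : next^[n] b ∈ Ico b a := by
    induction n with
    | zero => exact ⟨le_rfl, hba⟩
    | succ n ih =>
      rw [Function.iterate_succ_apply']
      exact ⟨ih.1.trans (hnext _ ih).1.le, (hnext _ ih).2⟩
  have hmono : StrictMono fun n => next^[n] b := strictMono_nat_of_lt_succ fun n => by
    simpa only [Function.iterate_succ_apply'] using (hnext _ (hmem n)).1
  refine (TVs_eq_top_of_strictMono hs hmono (fun n => hsub (hmem n)) hε fun n => ?_).not_lt hfin
  simpa only [Function.iterate_succ_apply'] using hjump _ (hmem n)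

theorem exists_tendsto_nhdsLT_of_TVs_lt_top (hs : 0 ≤ s) {a b : ℝ} (hsub : Ico b a ⊆ S)
    (hfin : TVs s u S < ⊤) (hba : b < a) : ∃ L, Tendsto u (𝓝[<] a) (𝓝 L) := by
  refine cauchy_map_iff_exists_tendsto.mp (Metric.cauchy_iff.mpr ⟨map_neBot, fun ε hε => ?_⟩)
  obtain ⟨t, ht, hosc⟩ :=
    exists_forall_abs_sub_lt_of_TVs_lt_top hs hsub hfin hba (half_pos hε)
  refine ⟨u '' Ioo t a, image_mem_map (Ioo_mem_nhdsLT ht.2), ?_⟩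
  rintro _ ⟨x, hx, rfl⟩ _ ⟨y, hy, rfl⟩
  calc dist (u x) (u y) ≤ |u x - u t| + |u y - u t| := by
        rw [Real.dist_eq, abs_sub_comm (u y)]; exact abs_sub_le _ _ _
    _ < ε / 2 + ε / 2 := add_lt_add (hosc x hx) (hosc y hy)
    _ = ε := add_halves ε

theorem exists_tendsto_nhdsGT_of_TVs_lt_top (hs : 0 ≤ s) {a b : ℝ} (hsub : Ioc a b ⊆ S)
    (hfin : TVs s u S < ⊤) (hab : a < b) : ∃ L, Tendsto u (𝓝[>] a) (𝓝 L) := by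
  have hsub' : Ico (-b) (-a) ⊆ -S := fun x hx =>
    Set.mem_neg.mpr (hsub ⟨lt_neg_of_lt_neg hx.2, neg_le.mp hx.1⟩)
  obtain ⟨L, hL⟩ := exists_tendsto_nhdsLT_of_TVs_lt_top hs hsub'
    (TVs_comp_neg_le.trans_lt hfin) (neg_lt_neg hab)
  exact ⟨L, by simpa only [Function.comp_def, neg_neg] using hL.comp tendsto_neg_nhdsGT⟩

end TVs

theorem regulated_of_TVs_lt_top_general (s : ℝ) (hs0 : 0 < s) (u : ℝ → ℝ)
    (I : Set ℝ) (hI : I.OrdConnected) (hfin : TVs s u I < ⊤) :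
    ∀ a ∈ I,
      ((∃ x ∈ I, a < x) →
        ∃ L : ℝ, Filter.Tendsto u (nhdsWithin a (Set.Ioi a)) (nhds L)) ∧
      ((∃ x ∈ I, x < a) →
        ∃ L : ℝ, Filter.Tendsto u (nhdsWithin a (Set.Iio a)) (nhds L)) := by
  intro a ha
  constructor
  · rintro ⟨b, hb, hab⟩
    exact exists_tendsto_nhdsGT_of_TVs_lt_top hs0.le
      (Ioc_subset_Icc_self.trans (hI.out ha hb)) hfin hab
  · rintro ⟨b, hb, hba⟩
    exact exists_tendsto_nhdsLT_of_TVs_lt_top hs0.le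
      (Ico_subset_Icc_self.trans (hI.out hb ha)) hfin hba

theorem regulated_of_TVs_lt_top (s : ℝ) (hs0 : 0 < s) (hs1 : s ≤ 1) (u : ℝ → ℝ)
    (I : Set ℝ) (hI : I.OrdConnected) (hfin : TVs s u I < ⊤) :
    ∀ a ∈ I,
      ((∃ x ∈ I, a < x) →
        ∃ L : ℝ, Filter.Tendsto u (nhdsWithin a (Set.Ioi a)) (nhds L)) ∧
      ((∃ x ∈ I, x < a) →
        ∃ L : ℝ, Filter.Tendsto u (nhdsWithin a (Set.Iio a)) (nhds L)) :=
  regulated_of_TVs_lt_top_general s hs0 u I hI hfin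
end

section
/- For u(x) = x·1_{[0,1]}(x) and any s ∈ (0,1), sup_{h>0} (1/h) ∫_ℝ |u(x+h) − u(x)|^{1/s} dx < 2 = TV^s u{ℝ}. Hence the inequality sup_{h>0} (1/h)∫|u(·+h)−u|^{1/s} ≤ TV^s u{ℝ} is in general strict. -/
/-!
Write `p = 1 / s > 1`. The increments of `u` are dominated by those of the nondecreasing function
equal to `u` on `(-∞, 1]` and to `2` beyond; as they are also at most `1` in size, raising them to
the power `p` only decreases them, so every subdivision sum telescopes to at most `2`, and the
subdivision `0 < 1 < 2` attains `2`.

For the difference quotients, `|u (x + h) - u x|` is at most `h` on `(-h, 1 - h]`, at most `1` on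
`(1 - h, 1]` and zero elsewhere, so `(1/h) ∫ |u (· + h) - u| ^ p ≤ h ^ (p - 1) + 1`, which is
at most `(3/4) ^ (p - 1) + 1 < 2` for `h ≤ 3/4`. For `h ≥ 3/4` the crude bound
`∫ |u (· + h) - u| ^ p ≤ ∫ u (· + h) + ∫ u = 1` gives a quotient at most `4/3`.
-/

open Set MeasureTheory Filter Topology ENNReal

noncomputable def unitRamp (x : ℝ) : ℝ := if x ∈ Icc (0:ℝ) 1 then x else 0

lemma sum_le_TVs {s : ℝ} {u : ℝ → ℝ} {S : Set ℝ} {n : ℕ} {x : ℕ → ℝ}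
    (hxS : ∀ i, i ≤ n → x i ∈ S) (hx : ∀ i, i < n → x i < x (i + 1)) :
    ∑ i ∈ Finset.range n, ENNReal.ofReal (|u (x (i + 1)) - u (x i)| ^ (1 / s)) ≤ TVs s u S :=
  le_sSup ⟨n, x, hxS, hx, rfl⟩

lemma TVs_le_ofReal {s M : ℝ} {u F : ℝ → ℝ} {S : Set ℝ}
    (hinc : ∀ a ∈ S, ∀ b ∈ S, a < b → |u b - u a| ^ (1 / s) ≤ F b - F a)
    (hosc : ∀ a ∈ S, ∀ b ∈ S, F b - F a ≤ M) :
    TVs s u S ≤ ENNReal.ofReal M := by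
  refine sSup_le ?_
  rintro _ ⟨n, x, hxS, hx, rfl⟩
  rw [← ENNReal.ofReal_sum_of_nonneg fun _ _ => by positivity]
  refine ENNReal.ofReal_le_ofReal ?_
  calc ∑ i ∈ Finset.range n, |u (x (i + 1)) - u (x i)| ^ (1 / s)
      ≤ ∑ i ∈ Finset.range n, (F (x (i + 1)) - F (x i)) := by
        refine Finset.sum_le_sum fun i hi => ?_
        have hi := Finset.mem_range.1 hi
        exact hinc _ (hxS i hi.le) _ (hxS (i + 1) hi) (hx i hi)
    _ = F (x n) - F (x 0) := Finset.sum_range_sub (fun i => F (x i)) n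
    _ ≤ M := hosc _ (hxS 0 n.zero_le) _ (hxS n le_rfl)

lemma iSup_inv_ofReal_mul_le_ofReal {f : ℝ → ℝ≥0∞} {C : ℝ}
    (hf : ∀ h > 0, f h ≤ ENNReal.ofReal (C * h)) :
    ⨆ h : {h : ℝ // 0 < h}, (ENNReal.ofReal h.1)⁻¹ * f h.1 ≤ ENNReal.ofReal C := by
  refine iSup_le fun ⟨h, hh⟩ => ?_
  rw [ENNReal.inv_mul_le_iff (by simpa using hh) ENNReal.ofReal_ne_top, mul_comm,
    ← ENNReal.ofReal_mul' hh.le]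
  exact hf h hh

namespace unitRamp

lemma of_nonpos {x : ℝ} (hx : x ≤ 0) : unitRamp x = 0 := by
  unfold unitRamp; split_ifs with h
  · exact le_antisymm hx h.1
  · rfl

lemma of_one_lt {x : ℝ} (hx : 1 < x) : unitRamp x = 0 :=
  if_neg fun h => hx.not_ge h.2

lemma eq_max_of_le_one {x : ℝ} (hx : x ≤ 1) : unitRamp x = max x 0 := by
  rcases le_total x 0 with h | h
  · rw [of_nonpos h, max_eq_right h]
  · rw [max_eq_left h]; exact if_pos ⟨h, hx⟩

lemma mem_Icc (x : ℝ) : unitRamp x ∈ Icc (0:ℝ) 1 := by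
  unfold unitRamp; split_ifs with h
  · exact h
  · exact ⟨le_rfl, zero_le_one⟩

lemma abs_sub_le_one (a b : ℝ) : |unitRamp b - unitRamp a| ≤ 1 := by
  have ha := mem_Icc a; have hb := mem_Icc b
  rw [abs_le]; constructor <;> linarith [ha.1, ha.2, hb.1, hb.2]

protected lemma measurable : Measurable unitRamp :=
  Measurable.ite measurableSet_Icc measurable_id measurable_const

noncomputable def variation (x : ℝ) : ℝ := unitRamp x + if 1 < x then 2 else 0

lemma variation_mem_Icc (x : ℝ) : variation x ∈ Icc (0:ℝ) 2 := by
  unfold variation; split_ifs with h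
  · rw [of_one_lt h]; norm_num
  · have := mem_Icc x; constructor <;> linarith [this.1, this.2]

lemma abs_sub_le_variation_sub {a b : ℝ} (hab : a < b) :
    |unitRamp b - unitRamp a| ≤ variation b - variation a := by
  unfold variation
  rcases le_or_gt b 1 with hb | hb
  · rw [if_neg hb.not_gt, if_neg (hab.trans_le hb).le.not_gt, eq_max_of_le_one hb,
      eq_max_of_le_one (hab.le.trans hb),
      abs_of_nonneg (sub_nonneg.2 (max_le_max_right 0 hab.le))]
    simp
  rcases le_or_gt a 1 with ha | ha
  · rw [if_pos hb, if_neg ha.not_gt]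
    linarith [abs_sub_le_one a b, (mem_Icc a).2, (mem_Icc b).1]
  · simp [of_one_lt ha, of_one_lt hb, ha, hb]

lemma TVs_univ_eq_two {s : ℝ} (hs0 : 0 < s) (hs1 : s ≤ 1) : TVs s unitRamp univ = 2 := by
  have hp : 1 ≤ 1 / s := one_le_one_div hs0 hs1
  refine le_antisymm ?_ ?_
  · have hosc : ∀ a ∈ univ, ∀ b ∈ univ, variation b - variation a ≤ 2 := fun a _ b _ =>
      by linarith [(variation_mem_Icc a).1, (variation_mem_Icc b).2]
    have hinc : ∀ a ∈ univ, ∀ b ∈ univ, a < b →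
        |unitRamp b - unitRamp a| ^ (1 / s) ≤ variation b - variation a := fun a _ b _ hab =>
      (Real.rpow_le_self_of_le_one (abs_nonneg _) (abs_sub_le_one a b) hp).trans
        (abs_sub_le_variation_sub hab)
    simpa using TVs_le_ofReal hinc hosc
  · refine Eq.trans_le ?_ (sum_le_TVs (s := s) (u := unitRamp) (n := 2)
      (x := fun i => (i : ℝ)) (fun _ _ => mem_univ _) (fun i _ => by simp))
    have h0 : unitRamp 0 = 0 := of_nonpos le_rfl
    have h1 : unitRamp 1 = 1 := if_pos ⟨zero_le_one, le_rfl⟩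
    have h2 : unitRamp 2 = 0 := of_one_lt one_lt_two
    norm_num [Finset.sum_range_succ, h0, h1, h2]

lemma lintegral_ofReal_eq_half :
    ∫⁻ x, ENNReal.ofReal (unitRamp x) = ENNReal.ofReal (1 / 2) := by
  have h_eq : unitRamp = (Icc (0:ℝ) 1).indicator id := by
    funext x; simp only [unitRamp, indicator_apply, id]
  have h_int : Integrable unitRamp := by
    rw [h_eq]; exact continuous_id.integrableOn_Icc.integrable_indicator measurableSet_Icc
  rw [← ofReal_integral_eq_lintegral_ofReal h_int (Eventually.of_forall fun x => (mem_Icc x).1),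
    h_eq, integral_indicator measurableSet_Icc, integral_Icc_eq_integral_Ioc,
    ← intervalIntegral.integral_of_le zero_le_one]
  norm_num [integral_id]

lemma lintegral_increment_le_one {p : ℝ} (hp : 1 ≤ p) (h : ℝ) :
    ∫⁻ x, ENNReal.ofReal (|unitRamp (x + h) - unitRamp x| ^ p) ≤ 1 :=
  calc ∫⁻ x, ENNReal.ofReal (|unitRamp (x + h) - unitRamp x| ^ p)
      ≤ ∫⁻ x, (ENNReal.ofReal (unitRamp (x + h)) + ENNReal.ofReal (unitRamp x)) := by
        refine lintegral_mono fun x => ?_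
        rw [← ENNReal.ofReal_add (mem_Icc _).1 (mem_Icc _).1]
        refine ENNReal.ofReal_le_ofReal ?_
        calc |unitRamp (x + h) - unitRamp x| ^ p ≤ |unitRamp (x + h) - unitRamp x| :=
              Real.rpow_le_self_of_le_one (abs_nonneg _) (abs_sub_le_one _ _) hp
          _ ≤ unitRamp (x + h) + unitRamp x :=
              abs_sub_le_iff.2 ⟨by linarith [(mem_Icc x).1], by linarith [(mem_Icc (x + h)).1]⟩
    _ = 1 := by
        rw [lintegral_add_right _ unitRamp.measurable.ennreal_ofReal,
          lintegral_add_right_eq_self (fun x => ENNReal.ofReal (unitRamp x)),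
          lintegral_ofReal_eq_half,
          ← ENNReal.ofReal_add (by norm_num) (by norm_num)]
        norm_num

lemma increment_le_indicator {p h : ℝ} (hp : 0 < p) (hh : 0 < h) (x : ℝ) :
    ENNReal.ofReal (|unitRamp (x + h) - unitRamp x| ^ p) ≤
      (Ioc (-h) (1 - h)).indicator (fun _ => ENNReal.ofReal (h ^ p)) x +
        (Ioc (1 - h) 1).indicator 1 x := by
  rcases le_or_gt x (-h) with hx₁ | hx₁
  · rw [of_nonpos (by linarith), of_nonpos (by linarith), sub_zero, abs_zero,
      Real.zero_rpow hp.ne', ENNReal.ofReal_zero]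
    exact zero_le
  rcases le_or_gt x (1 - h) with hx₂ | hx₂
  · rw [indicator_of_mem (show x ∈ Ioc (-h) (1 - h) from ⟨hx₁, hx₂⟩)]
    refine le_add_right (ENNReal.ofReal_le_ofReal (Real.rpow_le_rpow (abs_nonneg _) ?_ hp.le))
    calc |unitRamp (x + h) - unitRamp x| = |max (x + h) 0 - max x 0| := by
          rw [eq_max_of_le_one (by linarith), eq_max_of_le_one (by linarith)]
      _ ≤ |x + h - x| := abs_max_sub_max_le_abs _ _ _
      _ = h := by rw [add_sub_cancel_left, abs_of_pos hh]
  rcases le_or_gt x 1 with hx₃ | hx₃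
  · rw [indicator_of_mem (show x ∈ Ioc (1 - h) 1 from ⟨hx₂, hx₃⟩)]
    exact le_add_left (ENNReal.ofReal_le_one.2
      (Real.rpow_le_one (abs_nonneg _) (abs_sub_le_one _ _) hp.le))
  · rw [of_one_lt (by linarith), of_one_lt hx₃, sub_zero, abs_zero,
      Real.zero_rpow hp.ne', ENNReal.ofReal_zero]
    exact zero_le

lemma lintegral_increment_le {p h : ℝ} (hp : 0 < p) (hh : 0 < h) :
    ∫⁻ x, ENNReal.ofReal (|unitRamp (x + h) - unitRamp x| ^ p) ≤ ENNReal.ofReal (h ^ p + h) :=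
  calc ∫⁻ x, ENNReal.ofReal (|unitRamp (x + h) - unitRamp x| ^ p)
      ≤ ∫⁻ x, ((Ioc (-h) (1 - h)).indicator (fun _ => ENNReal.ofReal (h ^ p)) x +
          (Ioc (1 - h) 1).indicator 1 x) :=
        lintegral_mono (increment_le_indicator hp hh)
    _ = ENNReal.ofReal (h ^ p + h) := by
        rw [lintegral_add_left (measurable_const.indicator measurableSet_Ioc),
          lintegral_indicator_const measurableSet_Ioc, lintegral_indicator_one measurableSet_Ioc,
          Real.volume_Ioc, Real.volume_Ioc, ENNReal.ofReal_add (by positivity) hh.le]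
        norm_num

lemma exists_lintegral_increment_le {p : ℝ} (hp : 1 < p) :
    ∃ C < 2, ∀ h > 0, ∫⁻ x, ENNReal.ofReal (|unitRamp (x + h) - unitRamp x| ^ p) ≤
      ENNReal.ofReal (C * h) := by
  have hq : (3 / 4 : ℝ) ^ (p - 1) < 1 :=
    Real.rpow_lt_one (by norm_num) (by norm_num) (by linarith)
  refine ⟨max (4 / 3) ((3 / 4 : ℝ) ^ (p - 1) + 1), max_lt (by norm_num) (by linarith),
    fun h hh => ?_⟩
  rcases le_or_gt h (3 / 4) with hh' | hh'
  · refine (lintegral_increment_le (by linarith) hh).trans (ENNReal.ofReal_le_ofReal ?_)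
    have : h ^ (p - 1) ≤ (3 / 4 : ℝ) ^ (p - 1) := Real.rpow_le_rpow hh.le hh' (by linarith)
    calc h ^ p + h = (h ^ (p - 1) + 1) * h := by
          rw [add_mul, ← Real.rpow_add_one hh.ne', sub_add_cancel, one_mul]
      _ ≤ _ := mul_le_mul_of_nonneg_right (le_max_of_le_right (by linarith)) hh.le
  · refine (lintegral_increment_le_one hp.le h).trans ?_
    rw [← ENNReal.ofReal_one]
    refine ENNReal.ofReal_le_ofReal ?_
    nlinarith [le_max_left (4 / 3 : ℝ) ((3 / 4 : ℝ) ^ (p - 1) + 1)]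

lemma iSup_inv_mul_lintegral_increment_lt_two {p : ℝ} (hp : 1 < p) :
    (⨆ h : {h : ℝ // 0 < h}, (ENNReal.ofReal h.1)⁻¹ *
      ∫⁻ x, ENNReal.ofReal (|unitRamp (x + h.1) - unitRamp x| ^ p)) < 2 := by
  obtain ⟨C, hC, hbound⟩ := exists_lintegral_increment_le hp
  have hC' : ENNReal.ofReal C < 2 := by
    simpa using (ENNReal.ofReal_lt_ofReal_iff (by norm_num : (0:ℝ) < 2)).2 hC
  exact (iSup_inv_ofReal_mul_le_ofReal hbound).trans_lt hC'

end unitRamp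

theorem strict_Lip_inequality (s : ℝ) (hs0 : 0 < s) (hs1 : s < 1) :
    (⨆ h : {h : ℝ // 0 < h},
        (ENNReal.ofReal h.1)⁻¹ *
          ∫⁻ x, ENNReal.ofReal
            (|(if x + h.1 ∈ Set.Icc (0:ℝ) 1 then x + h.1 else 0) -
              (if x ∈ Set.Icc (0:ℝ) 1 then x else 0)| ^ (1 / s))) < 2 ∧
    TVs s (fun x => if x ∈ Set.Icc (0:ℝ) 1 then x else 0) Set.univ = 2 :=
  ⟨unitRamp.iSup_inv_mul_lintegral_increment_lt_two (one_lt_one_div hs0 hs1),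
    unitRamp.TVs_univ_eq_two hs0 hs1.le⟩
end

section
/- Let u : (0,∞) × ℝ → ℝ be P-periodic in x with mean m = (1/P)∫_0^P u(t,x)dx for every t > 0, and suppose u satisfies the one-sided Hölder condition u(t,y) − u(t,x) ≤ C (y−x)^s / t^s for all t > 0 and x < y, where s ∈ (0,1]. Then |u(t,x) − m| ≤ C P^s / t^s for all t > 0 and all x. -/
/-!
A one-sided bound `f y - f x ≤ B` for `x < y ≤ x + P` gives `f ≤ f x + B` on the period
`[x, x + P]` and `f x - B ≤ f` on the period `[x - P, x]`. Averaging over these two periods,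
both of which have mean `m` by periodicity, yields `f x - B ≤ m ≤ f x + B`.
-/

open MeasureTheory

namespace Function.Periodic

variable {f : ℝ → ℝ} {P : ℝ}

theorem intervalIntegral_add_period_eq (hf : Periodic f P) (a : ℝ) :
    ∫ y in a..a + P, f y = ∫ y in (0 : ℝ)..P, f y := by
  simpa using hf.intervalIntegral_add_eq a 0

theorem abs_sub_mean_le_of_oscillation_le (hf : Periodic f P) (hP : 0 < P)
    (hint : IntervalIntegrable f volume 0 P) {B : ℝ}
    (hosc : ∀ x y, x < y → y - x ≤ P → f y - f x ≤ B) (x : ℝ) :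
    |f x - (1 / P) * ∫ y in (0 : ℝ)..P, f y| ≤ B := by
  have hint' := hf.intervalIntegrable₀ hP.ne' hint
  have hupper : ∫ y in x..x + P, f y ≤ P * (f x + B) := by
    simpa using intervalIntegral.integral_mono_on_of_le_Ioo (by linarith) (hint' x (x + P))
      intervalIntegrable_const fun y hy => by linarith [hosc x y hy.1 (by linarith [hy.2])]
  have hlower : P * (f x - B) ≤ ∫ y in x - P..x, f y := by
    simpa using intervalIntegral.integral_mono_on_of_le_Ioo (by linarith)
      intervalIntegrable_const (hint' (x - P) x) fun y hy => by
        linarith [hosc y x hy.2 (by linarith [hy.1])]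
  have hprev : ∫ y in x - P..x, f y = ∫ y in (0 : ℝ)..P, f y := by
    simpa using hf.intervalIntegral_add_period_eq (x - P)
  rw [hf.intervalIntegral_add_period_eq] at hupper
  rw [hprev] at hlower
  rw [abs_le, one_div, ← div_eq_inv_mul]
  constructor
  · linarith [(div_le_iff₀' hP).2 hupper]
  · linarith [(le_div_iff₀' hP).2 hlower]

end Function.Periodic

theorem periodic_decay_general (u : ℝ → ℝ → ℝ) (P m C s : ℝ)
    (hP : 0 < P) (hs0 : 0 < s)
    (hper : ∀ t, 0 < t → ∀ x, u t (x + P) = u t x)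
    (hint : ∀ t, 0 < t → IntervalIntegrable (u t) volume 0 P)
    (hmean : ∀ t, 0 < t → (1 / P) * ∫ x in (0:ℝ)..P, u t x = m)
    (hols : ∀ t, 0 < t → ∀ x y : ℝ, x < y →
      u t y - u t x ≤ C * (y - x) ^ s / t ^ s) :
    ∀ t, 0 < t → ∀ x, |u t x - m| ≤ C * P ^ s / t ^ s := by
  intro t ht x
  have hC : 0 ≤ C := by
    have hperiod := hols t ht x (x + P) (by linarith)
    rw [hper t ht, sub_self, add_sub_cancel_left, mul_div_assoc] at hperiod
    exact nonneg_of_mul_nonneg_left hperiod (by positivity)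
  have hosc : ∀ x y, x < y → y - x ≤ P → u t y - u t x ≤ C * P ^ s / t ^ s :=
    fun x y hxy hlen => (hols t ht x y hxy).trans (by gcongr)
  simpa only [hmean t ht] using
    Function.Periodic.abs_sub_mean_le_of_oscillation_le (hper t ht) hP (hint t ht) hosc x

theorem periodic_decay (u : ℝ → ℝ → ℝ) (P m C s : ℝ)
    (hP : 0 < P) (hC : 0 < C) (hs0 : 0 < s) (hs1 : s ≤ 1)
    (hper : ∀ t, 0 < t → ∀ x, u t (x + P) = u t x)
    (hint : ∀ t, 0 < t → IntervalIntegrable (u t) volume 0 P)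
    (hmean : ∀ t, 0 < t → (1 / P) * ∫ x in (0:ℝ)..P, u t x = m)
    (hols : ∀ t, 0 < t → ∀ x y : ℝ, x < y →
      u t y - u t x ≤ C * (y - x) ^ s / t ^ s) :
    ∀ t, 0 < t → ∀ x, |u t x - m| ≤ C * P ^ s / t ^ s :=
  periodic_decay_general u P m C s hP hs0 hper hint hmean hols
end
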